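/- For the full (unrestricted) language W_{n+1} = A^{n+1} over an ordered alphabet A, the subgraph T of the de Bruijn graph of span n — consisting of the maximal-label outgoing arc of each vertex other than the maximal vertex m = a_max^n — is a spanning tree converging to m; consequently the minimal (greedy smallest-label) walk starting at m is an Eulerian circuit. -/

import Mathlib

/-- One step in the de Bruijn graph of span `n`. -/
def dbStep {A : Type*} (u : List A) (b : A) : List A := u.tail ++ [b]

/-- The vertex reached after the first `i` steps of the walk with label `s` starting
at vertex `m`. -/
def dbVtx {A : Type*} (m s : List A) (i : ℕ) : List A := (s.take i).foldl dbStep m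

/-!
Following maximal arcs from a word shifts in one `amax` per step, so within `n` steps every
vertex reaches `m = amax^n`: these arcs form a tree converging to `m`.

Every vertex of the de Bruijn graph has `|A|` outgoing and `|A|` incoming arcs (the predecessors
of `v` are the words `a :: v.dropLast`). So a trail that stops only when stuck ends at its start
`m` and enters every vertex as often as it leaves it: if it uses every arc out of `v`, it uses
every arc into `v`. For `v = u.tail ++ [amax]` this includes the maximal arc out of `u`, which the
greedy walk takes only after all other arcs out of `u`. Going backwards along the tree from `m`,
where the walk got stuck, every arc is used.
-/

open Finset Relation

theorem Fin.card_filter_add_ite_eq {α : Type*} [DecidableEq α] (V : ℕ → α) (L : ℕ) (v : α) :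
    #{i : Fin L | V i = v} + (if V L = v then 1 else 0) =
      #{i : Fin L | V (i + 1) = v} + (if V 0 = v then 1 else 0) := by
  have := (Fin.sum_univ_castSucc fun i : Fin (L + 1) => if V i = v then 1 else 0).symm.trans
    (Fin.sum_univ_succ fun i : Fin (L + 1) => if V i = v then 1 else 0)
  simp only [Fin.val_castSucc, Fin.val_last, Fin.val_zero, Fin.val_succ] at this
  rw [card_filter, card_filter, this, add_comm]
  rfl

namespace DeBruijn

variable {A : Type*}

/-- The arcs of the tree `T`. -/
def maxArc (n : ℕ) (amax : A) (x y : List A) : Prop :=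
  x.length = n ∧ x ≠ List.replicate n amax ∧ y = x.tail ++ [amax]

theorem reflTransGen_maxArc_append_replicate (amax : A) {n : ℕ} (v : List A) (k : ℕ)
    (h : v.length + k = n) :
    ReflTransGen (maxArc n amax) (v ++ List.replicate k amax) (List.replicate n amax) := by
  induction v generalizing k with
  | nil =>
    rw [List.length_nil, zero_add] at h
    simp [h, ReflTransGen.refl]
  | cons a v ih =>
    by_cases hm : a :: v ++ List.replicate k amax = List.replicate n amax
    · rw [hm]
    · simp only [List.length_cons] at h
      refine ReflTransGen.head ⟨by simp; omega, hm, ?_⟩ (ih (k + 1) (by omega))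
      simp [List.replicate_succ']

theorem reflTransGen_maxArc_replicate (amax : A) {n : ℕ} {u : List A} (hu : u.length = n) :
    ReflTransGen (maxArc n amax) u (List.replicate n amax) := by
  simpa using reflTransGen_maxArc_append_replicate amax u 0 (by simpa)

theorem length_dbStep {u : List A} (hu : u ≠ []) (b : A) : (dbStep u b).length = u.length := by
  have := List.length_pos_of_ne_nil hu
  simp [dbStep]
  omega

theorem length_foldl_dbStep (l : List A) {u : List A} (hu : u ≠ []) :
    (l.foldl dbStep u).length = u.length := by
  induction l generalizing u with
  | nil => rfl
  | cons b l ih => rw [List.foldl_cons, ih (by simp [dbStep]), length_dbStep hu]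

theorem getLast?_dbStep (u : List A) (b : A) : (dbStep u b).getLast? = some b := by
  simp [dbStep]

variable {m s : List A}

theorem dbVtx_ne_nil (hm : m ≠ []) (i : ℕ) : dbVtx m s i ≠ [] :=
  List.ne_nil_of_length_pos (by
    rw [dbVtx, length_foldl_dbStep _ hm]; exact List.length_pos_of_ne_nil hm)

theorem dbVtx_zero : dbVtx m s 0 = m := by simp [dbVtx]

theorem dbVtx_length : dbVtx m s s.length = s.foldl dbStep m := by simp [dbVtx]

theorem dbVtx_succ (i : Fin s.length) : dbVtx m s (i + 1) = dbStep (dbVtx m s i) (s.get i) := by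
  rw [dbVtx, List.take_add_one, List.getElem?_eq_getElem i.2, List.foldl_append]
  rfl

theorem get_eq_of_dbVtx_succ_eq {i j : Fin s.length} (h : dbVtx m s (i + 1) = dbVtx m s (j + 1)) :
    s.get i = s.get j := by
  simpa [dbVtx_succ, getLast?_dbStep] using congrArg List.getLast? h

def IsTrail (m s : List A) : Prop :=
  Function.Injective fun i : Fin s.length => (dbVtx m s i, s.get i)

def IsGreedy [Preorder A] (m s : List A) : Prop :=
  ∀ i : Fin s.length, ∀ b : A,
    (∀ j < i, ¬(dbVtx m s j = dbVtx m s i ∧ s.get j = b)) → s.get i ≤ b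

def UsesArc (m s u : List A) (b : A) : Prop :=
  ∃ i : Fin s.length, dbVtx m s i = u ∧ s.get i = b

theorem forall_usesArc_of_usesArc_top [PartialOrder A] {amax : A} (hamax : IsTop amax)
    (hg : IsGreedy m s) {u : List A} (h : UsesArc m s u amax) (b : A) : UsesArc m s u b := by
  obtain ⟨i, rfl, hi⟩ := h
  by_contra hb
  have : amax ≤ b := hi ▸ hg i b fun j _ hj => hb ⟨j, hj⟩
  exact hb ⟨i, rfl, hi.trans (le_antisymm (hamax b) this).symm⟩

variable [DecidableEq A]

def exits (m s v : List A) : Finset (Fin s.length) := {i | dbVtx m s i = v}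

def entries (m s v : List A) : Finset (Fin s.length) := {i | dbVtx m s (i + 1) = v}

theorem card_exits_add_ite_eq (v : List A) :
    #(exits m s v) + (if dbVtx m s s.length = v then 1 else 0) =
      #(entries m s v) + (if m = v then 1 else 0) := by
  have := Fin.card_filter_add_ite_eq (dbVtx m s) s.length v
  rwa [dbVtx_zero] at this

theorem card_exits_eq_card_entries (hclosed : dbVtx m s s.length = m) (v : List A) :
    #(exits m s v) = #(entries m s v) := by
  simpa [hclosed] using card_exits_add_ite_eq (m := m) (s := s) v

theorem injOn_dbVtx_entries (ht : IsTrail m s) (v : List A) :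
    Set.InjOn (fun i : Fin s.length => dbVtx m s i) (entries m s v) := fun _ hi _ hj hij =>
  ht (Prod.ext hij (get_eq_of_dbVtx_succ_eq ((mem_filter.1 hi).2.trans (mem_filter.1 hj).2.symm)))

variable [Fintype A]

def predecessors (v : List A) : Finset (List A) := univ.image (· :: v.dropLast)

theorem mem_predecessors_of_dbStep_eq {u v : List A} {b : A} (hu : u ≠ []) (h : dbStep u b = v) :
    u ∈ predecessors v :=
  mem_image.2 ⟨u.head hu, mem_univ _, by
    rw [← h, dbStep, List.dropLast_concat, List.cons_head_tail]⟩

theorem card_predecessors_le (v : List A) : #(predecessors v) ≤ Fintype.card A :=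
  card_image_le

theorem card_exits_of_forall_usesArc (ht : IsTrail m s) {v : List A} (hv : ∀ b, UsesArc m s v b) :
    #(exits m s v) = Fintype.card A := by
  have hinj : Set.InjOn s.get (exits m s v) := fun i hi j hj hij =>
    ht (Prod.ext ((mem_filter.1 hi).2.trans (mem_filter.1 hj).2.symm) hij)
  have himage : (exits m s v).image s.get = univ := eq_univ_of_forall fun b =>
    let ⟨i, hi, hib⟩ := hv b
    mem_image.2 ⟨i, mem_filter.2 ⟨mem_univ _, hi⟩, hib⟩
  rw [← card_image_of_injOn hinj, himage, card_univ]

theorem mapsTo_dbVtx_entries (hm : m ≠ []) (v : List A) :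
    Set.MapsTo (fun i : Fin s.length => dbVtx m s i) (entries m s v) (predecessors v) :=
  fun i hi => mem_predecessors_of_dbStep_eq (dbVtx_ne_nil hm i)
    ((dbVtx_succ i).symm.trans (mem_filter.1 hi).2)

theorem dbVtx_length_eq_of_forall_usesArc (hm : m ≠ []) (ht : IsTrail m s)
    (hstop : ∀ b, UsesArc m s (dbVtx m s s.length) b) : dbVtx m s s.length = m := by
  by_contra hne
  have hcount := card_exits_add_ite_eq (m := m) (s := s) (dbVtx m s s.length)
  rw [if_pos rfl, if_neg (Ne.symm hne), card_exits_of_forall_usesArc ht hstop] at hcount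
  have hentries := (card_le_card_of_injOn _ (mapsTo_dbVtx_entries hm _)
    (injOn_dbVtx_entries ht _)).trans (card_predecessors_le (dbVtx m s s.length))
  omega

theorem usesArc_of_dbStep_eq (hm : m ≠ []) (ht : IsTrail m s) (hclosed : dbVtx m s s.length = m)
    {u v : List A} {b : A} (hv : ∀ b, UsesArc m s v b) (hu : u ≠ []) (h : dbStep u b = v) :
    UsesArc m s u b := by
  have hcard : #(predecessors v) ≤ #(entries m s v) := by
    rw [← card_exits_eq_card_entries hclosed, card_exits_of_forall_usesArc ht hv]
    exact card_predecessors_le v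
  obtain ⟨i, hi, rfl⟩ := surjOn_of_injOn_of_card_le _ (mapsTo_dbVtx_entries hm v)
    (injOn_dbVtx_entries ht v) hcard (mem_predecessors_of_dbStep_eq hu h)
  refine ⟨i, rfl, ?_⟩
  have hv : dbVtx m s (i + 1) = dbStep (dbVtx m s i) b := (mem_filter.1 hi).2.trans h.symm
  simpa [dbVtx_succ, getLast?_dbStep] using congrArg List.getLast? hv

theorem forall_usesArc_of_isGreedy [PartialOrder A] {n : ℕ} (hn : 0 < n) {amax : A}
    (hamax : IsTop amax) (ht : IsTrail (List.replicate n amax) s)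
    (hg : IsGreedy (List.replicate n amax) s)
    (hclosed : dbVtx (List.replicate n amax) s s.length = List.replicate n amax)
    (hstuck : ∀ b, UsesArc (List.replicate n amax) s (List.replicate n amax) b)
    {u : List A} (hu : u.length = n) : ∀ b, UsesArc (List.replicate n amax) s u b := by
  have hpath := reflTransGen_maxArc_replicate amax hu
  clear hu
  induction hpath using ReflTransGen.head_induction_on with
  | refl => exact hstuck
  | head hac _ ih =>
    obtain ⟨ha, -, rfl⟩ := hac
    exact forall_usesArc_of_usesArc_top hamax hg (usesArc_of_dbStep_eq (by simpa using hn.ne') ht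
      hclosed ih (List.ne_nil_of_length_pos (by omega)) rfl)

end DeBruijn

open DeBruijn

/-- Unrestricted case: for the full language `W_{n+1} = A^{n+1}` over an ordered alphabet,
the subgraph `T` of the de Bruijn graph of span `n` — consisting of the maximal-label
outgoing arc of each vertex other than the maximal vertex `m = amax^n` (namely the arc to
the suffix of `v ++ [amax]`) — is a spanning tree converging to `m`; consequently the
minimal (greedy smallest-label) walk starting at `m` is an Eulerian circuit. -/
theorem unrestricted_minimal_walk_eulerian {A : Type*} [LinearOrder A] [Fintype A]
    (n : ℕ) (hn : 0 < n) (amax : A) (hamax : ∀ a : A, a ≤ amax)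
    (s : List A)
    -- s is the label of a walk starting at m = amax^n which never repeats an arc ...
    (honce : ∀ i j (hi : i < s.length) (hj : j < s.length),
      dbVtx (List.replicate n amax) s i = dbVtx (List.replicate n amax) s j →
      s.get ⟨i, hi⟩ = s.get ⟨j, hj⟩ → i = j)
    -- ... always takes the unvisited arc of minimal label ...
    (hmin : ∀ i (hi : i < s.length), ∀ b : A,
      (∀ j (hj : j < i), ¬(dbVtx (List.replicate n amax) s j = dbVtx (List.replicate n amax) s i
        ∧ s.get ⟨j, by omega⟩ = b)) →
      s.get ⟨i, hi⟩ ≤ b)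
    -- ... and stops only when every outgoing arc of the final vertex has been used
    (hstop : ∀ b : A, ∃ (j : ℕ) (hj : j < s.length),
      dbVtx (List.replicate n amax) s j = dbVtx (List.replicate n amax) s s.length ∧
      s.get ⟨j, hj⟩ = b) :
    -- T is a spanning tree converging to m ...
    (∀ u : List A, u.length = n → Relation.ReflTransGen
      (fun x y => x.length = n ∧ x ≠ List.replicate n amax ∧ y = x.tail ++ [amax])
      u (List.replicate n amax)) ∧
    -- ... and the minimal walk is an Eulerian circuit
    ((∀ u : List A, u.length = n → ∀ b : A,
        ∃ (i : ℕ) (hi : i < s.length), dbVtx (List.replicate n amax) s i = u ∧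
          s.get ⟨i, hi⟩ = b) ∧
      s.foldl dbStep (List.replicate n amax) = List.replicate n amax) := by
  have hm : List.replicate n amax ≠ [] := by simpa using hn.ne'
  have ht : IsTrail (List.replicate n amax) s := fun i j h =>
    Fin.ext (honce i j i.2 j.2 (congrArg Prod.fst h) (congrArg Prod.snd h))
  have hg : IsGreedy (List.replicate n amax) s := fun i b h =>
    hmin i i.2 b fun j hj => h ⟨j, by omega⟩ hj
  have hstop' : ∀ b, UsesArc (List.replicate n amax) s
      (dbVtx (List.replicate n amax) s s.length) b := fun b =>
    let ⟨j, hj, h⟩ := hstop b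
    ⟨⟨j, hj⟩, h⟩
  have hclosed := dbVtx_length_eq_of_forall_usesArc hm ht hstop'
  have hstuck : ∀ b, UsesArc (List.replicate n amax) s (List.replicate n amax) b := by
    rwa [hclosed] at hstop'
  refine ⟨fun u hu => reflTransGen_maxArc_replicate amax hu, fun u hu b => ?_, ?_⟩
  · obtain ⟨i, h⟩ := forall_usesArc_of_isGreedy hn hamax ht hg hclosed hstuck hu b
    exact ⟨i, i.2, h⟩
  · rwa [← dbVtx_length]
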